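/- arXiv:1009.1280 — 2 statements merged into one kernel-verified Lean document; each statement's English description precedes it below -/
import Mathlib

section
/- Let a be a left-central Courant algebra over a Lie algebra g with h = ker p. Then the bracket defined on h ⊕ a ⊕ g by the formula {(h₁,a₁,g₁),(h₂,a₂,g₂)} = ([[b₁,h₂]] + [[a₁,a₂]] + [[a₂,a₁]] - [[b₂,h₁]], [[b₁,a₂]] - [[b₂,a₁]], [g₁,g₂]), where p(bᵢ) = gᵢ, is well-defined, i.e. independent of the choices of b₁, b₂. -/
/-- A Courant algebra over a Lie algebra `g`: a vector space `a` with a bilinear bracket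
`[[·,·]]` and a linear map `p : a → g` satisfying the left Leibniz identity and
compatibility of `p` with the brackets. -/
structure CourantAlgebra (k a g : Type*) [Field k] [AddCommGroup a] [Module k a]
    [LieRing g] [LieAlgebra k g] where
  br : a →ₗ[k] a →ₗ[k] a
  p : a →ₗ[k] g
  leibniz : ∀ x y z : a, br x (br y z) = br (br x y) z + br y (br x z)
  p_br : ∀ x y : a, p (br x y) = ⁅p x, p y⁆

/-- For a left-central Courant algebra `a` over `g` with `h = ker p`, the
bracket on `h ⊕ a ⊕ g` given by
`{(h₁,a₁,g₁),(h₂,a₂,g₂)} = ([[b₁,h₂]] + [[a₁,a₂]] + [[a₂,a₁]] - [[b₂,h₁]],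
[[b₁,a₂]] - [[b₂,a₁]], [g₁,g₂])` where `p(bᵢ) = gᵢ` is well-defined, i.e. independent
of the choices of `b₁` and `b₂`. -/
theorem left_central_courant_bracket_well_defined
    {k a g : Type*} [Field k] [AddCommGroup a] [Module k a] [LieRing g] [LieAlgebra k g]
    (C : CourantAlgebra k a g)
    (hlc : ∀ h x : a, C.p h = 0 → C.br h x = 0)
    (h₁ h₂ a₁ a₂ b₁ b₁' b₂ b₂' : a)
    (hh₁ : C.p h₁ = 0) (hh₂ : C.p h₂ = 0)
    (hb₁ : C.p b₁ = C.p b₁') (hb₂ : C.p b₂ = C.p b₂') :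
    C.br b₁ h₂ + C.br a₁ a₂ + C.br a₂ a₁ - C.br b₂ h₁
      = C.br b₁' h₂ + C.br a₁ a₂ + C.br a₂ a₁ - C.br b₂' h₁ ∧
    C.br b₁ a₂ - C.br b₂ a₁ = C.br b₁' a₂ - C.br b₂' a₁ := by
  have k₁ : ∀ x : a, C.br b₁ x = C.br b₁' x := by
    intro x
    have h := hlc (b₁ - b₁') x (by simp [hb₁])
    simpa [sub_eq_zero] using h
  have k₂ : ∀ x : a, C.br b₂ x = C.br b₂' x := by
    intro x
    have h := hlc (b₂ - b₂') x (by simp [hb₂])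
    simpa [sub_eq_zero] using h
  exact ⟨by rw [k₁, k₂], by rw [k₁, k₂]⟩
end

section
/- A matched pair structure: if Lie algebras g and h act on each other by the actions of a matched pair, then the vector space g ⊕ h carries a Lie bracket [(x₁,y₁),(x₂,y₂)] = ([x₁,x₂] + y₁▷x₂ - y₂▷x₁, [y₁,y₂] + x₁▶y₂ - x₂▶y₁) satisfying the Jacobi identity, where ▷ : h × g → g and ▶ : g × h → h are the mutual actions satisfying the matched-pair compatibility conditions. -/
set_option maxHeartbeats 1000000


/-- If Lie algebras `g` and `h` form a matched pair, with mutual actions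
`▷ : h × g → g` and `▶ : g × h → h` satisfying the matched-pair compatibility conditions,
then `g ⊕ h` carries a Lie bracket
`[(x₁,y₁),(x₂,y₂)] = ([x₁,x₂] + y₁▷x₂ - y₂▷x₁, [y₁,y₂] + x₁▶y₂ - x₂▶y₁)`:
it is antisymmetric and satisfies the Jacobi identity. -/
theorem matched_pair_bracket_is_lie
    {k g h : Type*} [Field k] [LieRing g] [LieAlgebra k g] [LieRing h] [LieAlgebra k h]
    (act₁ : h →ₗ[k] g →ₗ[k] g)  -- ▷
    (act₂ : g →ₗ[k] h →ₗ[k] h)  -- ▶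
    -- ▷ is a Lie module action of h on g
    (hact₁ : ∀ (y₁ y₂ : h) (x : g),
      act₁ ⁅y₁, y₂⁆ x = act₁ y₁ (act₁ y₂ x) - act₁ y₂ (act₁ y₁ x))
    -- ▶ is a Lie module action of g on h
    (hact₂ : ∀ (x₁ x₂ : g) (y : h),
      act₂ ⁅x₁, x₂⁆ y = act₂ x₁ (act₂ x₂ y) - act₂ x₂ (act₂ x₁ y))
    -- matched-pair compatibility conditions
    (hcomp₁ : ∀ (y : h) (x₁ x₂ : g),
      act₁ y ⁅x₁, x₂⁆ = ⁅act₁ y x₁, x₂⁆ + ⁅x₁, act₁ y x₂⁆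
        + act₁ (act₂ x₂ y) x₁ - act₁ (act₂ x₁ y) x₂)
    (hcomp₂ : ∀ (x : g) (y₁ y₂ : h),
      act₂ x ⁅y₁, y₂⁆ = ⁅act₂ x y₁, y₂⁆ + ⁅y₁, act₂ x y₂⁆
        + act₂ (act₁ y₂ x) y₁ - act₂ (act₁ y₁ x) y₂)
    (B : g × h → g × h → g × h)
    (hB : ∀ p q : g × h,
      B p q = (⁅p.1, q.1⁆ + act₁ p.2 q.1 - act₁ q.2 p.1,
               ⁅p.2, q.2⁆ + act₂ p.1 q.2 - act₂ q.1 p.2)) :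
    (∀ p q : g × h, B p q = -B q p) ∧
    (∀ p q r : g × h, B p (B q r) = B (B p q) r + B q (B p r)) := by
  constructor
  · rintro ⟨p1,p2⟩ ⟨q1,q2⟩
    rw [hB, hB, Prod.neg_mk, Prod.mk.injEq]
    constructor
    · rw [← lie_skew]; abel
    · rw [← lie_skew]; abel
  · rintro ⟨p1,p2⟩ ⟨q1,q2⟩ ⟨r1,r2⟩
    simp only [hB]
    rw [Prod.mk_add_mk, Prod.mk.injEq]
    simp only [map_add, map_sub, lie_add, add_lie, lie_sub, sub_lie,
      LinearMap.add_apply, LinearMap.sub_apply, hact₁, hact₂, hcomp₁, hcomp₂]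
    constructor
    · rw [lie_lie p1 q1 r1, ← lie_skew ((act₁ r2) p1) q1]; abel
    · rw [lie_lie p2 q2 r2, ← lie_skew ((act₂ r1) p2) q2]; abel
end
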